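/- arXiv:2205.10112 — 8 statements merged into one kernel-verified Lean document; each statement's English description precedes it below -/
import Mathlib

section
/- Let U, X, Y be Hilbert spaces and A : Y → X, B : U → X bounded operators. There exists a bounded operator Y₀ : U → Y with A Y₀ = B and ‖Y₀‖ ≤ 1 if and only if B B* ≼ A A* (i.e., A A* − B B* is positive semidefinite). -/
/-!
Taking adjoints, `A Y₀ = B` with `‖Y₀‖ ≤ 1` says that the contraction `C = Y₀*` satisfies
`C A* = B*`, while `B B* ≼ A A*` says that `‖B* x‖ ≤ ‖A* x‖` for every `x`. Given this norm
inequality, `A* x ↦ B* x` is a well-defined contraction on the range of `A*`; it extends by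
continuity to the closure of the range, and by precomposing with the orthogonal projection onto
that closure to all of `Y`. Conversely `‖B* x‖ = ‖C A* x‖ ≤ ‖A* x‖`.
-/

open ContinuousLinearMap
open scoped ComplexInnerProductSpace

namespace ContinuousLinearMap

variable {𝕜 E F G : Type*} [RCLike 𝕜]

section Factorization

variable [SeminormedAddCommGroup E] [NormedSpace 𝕜 E]
  [NormedAddCommGroup F] [InnerProductSpace 𝕜 F] [CompleteSpace F]
  [NormedAddCommGroup G] [NormedSpace 𝕜 G] [CompleteSpace G]

theorem exists_comp_eq_of_norm_le (S : E →L[𝕜] F) (T : E →L[𝕜] G)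
    (h : ∀ x, ‖T x‖ ≤ ‖S x‖) : ∃ C : F →L[𝕜] G, C ∘L S = T ∧ ‖C‖ ≤ 1 := by
  set K := S.range.topologicalClosure
  let e : E →ₗ[𝕜] K :=
    (S : E →ₗ[𝕜] F).codRestrict K fun x => S.range.le_topologicalClosure ⟨x, rfl⟩
  have he : DenseRange e := by
    rw [DenseRange, Subtype.dense_iff, ← Set.range_comp]
    exact (S.range.topologicalClosure_coe).subset
  have hTe : ∀ x, ‖T x‖ ≤ 1 * ‖e x‖ := fun x => (one_mul ‖S x‖).symm ▸ h x
  refine ⟨(T : E →ₗ[𝕜] G).extendOfNorm e ∘L K.orthogonalProjectionOnto, ?_, ?_⟩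
  · ext x
    have hproj : K.orthogonalProjectionOnto (S x) = e x :=
      K.orthogonalProjectionOnto_mem_subspace_eq_self (e x)
    simp only [comp_apply, hproj, LinearMap.extendOfNorm_eq he ⟨1, hTe⟩, coe_coe]
  · calc _ ≤ ‖(T : E →ₗ[𝕜] G).extendOfNorm e‖ * ‖K.orthogonalProjectionOnto‖ :=
          opNorm_comp_le _ _
      _ ≤ 1 * 1 := by
        gcongr
        · exact LinearMap.opNorm_extendOfNorm_le he zero_le_one hTe
        · exact K.orthogonalProjectionOnto_norm_le
      _ = 1 := one_mul 1

theorem exists_comp_eq_and_norm_le_one_iff (S : E →L[𝕜] F) (T : E →L[𝕜] G) :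
    (∃ C : F →L[𝕜] G, C ∘L S = T ∧ ‖C‖ ≤ 1) ↔ ∀ x, ‖T x‖ ≤ ‖S x‖ := by
  refine ⟨?_, exists_comp_eq_of_norm_le S T⟩
  rintro ⟨C, rfl, hC⟩ x
  simpa only [one_mul, comp_apply] using C.le_of_opNorm_le hC (S x)

end Factorization

variable [NormedAddCommGroup E] [InnerProductSpace 𝕜 E] [CompleteSpace E]
  [NormedAddCommGroup F] [InnerProductSpace 𝕜 F] [CompleteSpace F]
  [NormedAddCommGroup G] [InnerProductSpace 𝕜 G] [CompleteSpace G]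

theorem exists_comp_eq_and_norm_le_one_iff_adjoint (A : F →L[𝕜] G) (B : E →L[𝕜] G) :
    (∃ C : E →L[𝕜] F, A ∘L C = B ∧ ‖C‖ ≤ 1) ↔
      ∃ D : F →L[𝕜] E, D ∘L adjoint A = adjoint B ∧ ‖D‖ ≤ 1 := by
  refine adjoint.toLinearEquiv.toEquiv.exists_congr fun C => ?_
  simp only [LinearEquiv.coe_toEquiv, LinearIsometryEquiv.coe_toLinearEquiv,
    LinearIsometryEquiv.norm_map, ← adjoint_comp, adjoint.injective.eq_iff]

theorem self_comp_adjoint_le_self_comp_adjoint_iff (A : F →L[𝕜] G) (B : E →L[𝕜] G) :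
    B ∘L adjoint B ≤ A ∘L adjoint A ↔ ∀ x, ‖adjoint B x‖ ≤ ‖adjoint A x‖ := by
  have hsa : IsSelfAdjoint (A ∘L adjoint A - B ∘L adjoint B) :=
    (isPositive_self_comp_adjoint A).isSelfAdjoint.sub
      (isPositive_self_comp_adjoint B).isSelfAdjoint
  have hre : ∀ x, (A ∘L adjoint A - B ∘L adjoint B).reApplyInnerSelf x =
      ‖adjoint A x‖ ^ 2 - ‖adjoint B x‖ ^ 2 := fun x => by
    rw [apply_norm_sq_eq_inner_adjoint_left, apply_norm_sq_eq_inner_adjoint_left, adjoint_adjoint,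
      adjoint_adjoint, reApplyInnerSelf, sub_apply, inner_sub_left, map_sub]
  simp only [le_def, isPositive_def', hsa, true_and, hre, sub_nonneg]
  exact forall_congr' fun x => sq_le_sq₀ (norm_nonneg _) (norm_nonneg _)

end ContinuousLinearMap

/-- Douglas factorization lemma: there exists a contraction `Y₀ : U → Y` with
`A Y₀ = B` if and only if `A A* - B B* ⪰ 0`. -/
theorem douglas_contractive_factorization
    {U X Y : Type*} [NormedAddCommGroup U] [InnerProductSpace ℂ U] [CompleteSpace U]
    [NormedAddCommGroup X] [InnerProductSpace ℂ X] [CompleteSpace X]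
    [NormedAddCommGroup Y] [InnerProductSpace ℂ Y] [CompleteSpace Y]
    (A : Y →L[ℂ] X) (B : U →L[ℂ] X) :
    (∃ Y₀ : U →L[ℂ] Y, A ∘L Y₀ = B ∧ ‖Y₀‖ ≤ 1) ↔
      (A ∘L adjoint A - B ∘L adjoint B).IsPositive := by
  rw [exists_comp_eq_and_norm_le_one_iff_adjoint, exists_comp_eq_and_norm_le_one_iff, ← le_def,
    self_comp_adjoint_le_self_comp_adjoint_iff]
end

section
/- Let U, X, Y be Hilbert spaces, A ∈ L(U,X), B ∈ L(Y,X), and Y₀ ∈ L(U,Y). Then (A Y₀ = B and ‖Y₀‖ ≤ 1) holds if and only if the 3×3 block operator matrix [[I_U, B*, Y₀*],[B, A A*, A],[Y₀, A*, I_Y]] on U ⊕ X ⊕ Y is positive semidefinite. -/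
open ContinuousLinearMap
open scoped ComplexInnerProductSpace

lemma inner_re_symm' {V : Type*} [NormedAddCommGroup V] [InnerProductSpace ℂ V] (a b : V) :
    (⟪a, b⟫).re = (⟪b, a⟫).re := by
  rw [← inner_conj_symm, Complex.conj_re]

lemma douglas_key_id
    {U X Y : Type*} [NormedAddCommGroup U] [InnerProductSpace ℂ U] [CompleteSpace U]
    [NormedAddCommGroup X] [InnerProductSpace ℂ X] [CompleteSpace X]
    [NormedAddCommGroup Y] [InnerProductSpace ℂ Y] [CompleteSpace Y]
    (A : Y →L[ℂ] X) (B : U →L[ℂ] X) (Y₀ : U →L[ℂ] Y) (u : U) (x : X) (y : Y) :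
    (⟪u + adjoint B x + adjoint Y₀ y, u⟫
              + ⟪B u + A (adjoint A x) + A y, x⟫
              + ⟪Y₀ u + adjoint A x + y, y⟫).re
    = ‖u‖ ^ 2 - ‖Y₀ u‖ ^ 2 + ‖adjoint A x + (Y₀ u + y)‖ ^ 2
        + 2 * (⟪B u - A (Y₀ u), x⟫).re := by
  simp only [inner_add_left, inner_sub_left, Complex.add_re, Complex.sub_re,
    adjoint_inner_left, norm_add_sq (𝕜 := ℂ), inner_add_right, map_add]
  rw [← inner_self_eq_norm_sq (𝕜 := ℂ) u, ← inner_self_eq_norm_sq (𝕜 := ℂ) (Y₀ u),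
    ← inner_self_eq_norm_sq (𝕜 := ℂ) y, ← inner_self_eq_norm_sq (𝕜 := ℂ) (adjoint A x)]
  simp only [adjoint_inner_left, RCLike.re_to_complex]
  rw [inner_re_symm' x (B u), inner_re_symm' y (Y₀ u), inner_re_symm' x (A y),
    inner_re_symm' x (A (Y₀ u)), inner_re_symm' x (A (adjoint A x))]
  ring

/-- `A Y₀ = B` with `‖Y₀‖ ≤ 1` holds iff the 3×3 block operator matrix
`[[I_U, B*, Y₀*],[B, A A*, A],[Y₀, A*, I_Y]]` on `U ⊕ X ⊕ Y` is positive
semidefinite (stated via its quadratic form). -/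
theorem douglas_block_matrix_characterization
    {U X Y : Type*} [NormedAddCommGroup U] [InnerProductSpace ℂ U] [CompleteSpace U]
    [NormedAddCommGroup X] [InnerProductSpace ℂ X] [CompleteSpace X]
    [NormedAddCommGroup Y] [InnerProductSpace ℂ Y] [CompleteSpace Y]
    (A : Y →L[ℂ] X) (B : U →L[ℂ] X) (Y₀ : U →L[ℂ] Y) :
    (A ∘L Y₀ = B ∧ ‖Y₀‖ ≤ 1) ↔
      ∀ (u : U) (x : X) (y : Y),
        0 ≤ (⟪u + adjoint B x + adjoint Y₀ y, u⟫
              + ⟪B u + A (adjoint A x) + A y, x⟫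
              + ⟪Y₀ u + adjoint A x + y, y⟫).re := by
  constructor
  · rintro ⟨hB, hY⟩ u x y
    rw [douglas_key_id]
    have hw : B u - A (Y₀ u) = 0 := by
      rw [← hB]; simp
    rw [hw, inner_zero_left]
    have h1 : ‖Y₀ u‖ ≤ ‖u‖ := by
      calc ‖Y₀ u‖ ≤ ‖Y₀‖ * ‖u‖ := Y₀.le_opNorm u
        _ ≤ 1 * ‖u‖ := mul_le_mul_of_nonneg_right hY (norm_nonneg u)
        _ = ‖u‖ := one_mul _
    have h2 : ‖Y₀ u‖ ^ 2 ≤ ‖u‖ ^ 2 := by nlinarith [norm_nonneg (Y₀ u)]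
    have h3 : (0 : ℝ) ≤ ‖adjoint A x + (Y₀ u + y)‖ ^ 2 := sq_nonneg _
    simp only [Complex.zero_re]
    linarith
  · intro h
    have hle : ∀ u, ‖Y₀ u‖ ≤ ‖u‖ := by
      intro u
      have h0 := h u 0 (-(Y₀ u))
      rw [douglas_key_id] at h0
      simp only [map_zero, add_neg_cancel, add_zero, norm_zero, inner_zero_right,
        Complex.zero_re, mul_zero] at h0
      nlinarith [norm_nonneg (Y₀ u), norm_nonneg u]
    constructor
    · ext u
      simp only [comp_apply]
      set w : X := B u - A (Y₀ u) with hwdef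
      have key : ∀ t : ℝ, 0 ≤ ‖u‖ ^ 2 - ‖Y₀ u‖ ^ 2 + 2 * (t * ‖w‖ ^ 2) := by
        intro t
        have h0 := h u ((t : ℂ) • w) (-(Y₀ u) - adjoint A ((t : ℂ) • w))
        rw [douglas_key_id] at h0
        have hz : adjoint A ((t : ℂ) • w) + (Y₀ u + (-(Y₀ u) - adjoint A ((t : ℂ) • w))) = 0 := by
          abel
        rw [hz] at h0
        have hi : (⟪w, (t : ℂ) • w⟫).re = t * ‖w‖ ^ 2 := by
          rw [inner_smul_right, inner_self_eq_norm_sq_to_K,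
            show (@RCLike.ofReal ℂ _ ‖w‖) = (‖w‖ : ℂ) from rfl, ← Complex.ofReal_pow,
            ← Complex.ofReal_mul, Complex.ofReal_re]
        rw [hi] at h0
        simpa using h0
      have hw0 : w = 0 := by
        by_contra hne
        have hpos : 0 < ‖w‖ ^ 2 := by
          have := norm_pos_iff.mpr hne
          nlinarith
        have := key (-(‖u‖ ^ 2 - ‖Y₀ u‖ ^ 2 + 1) / (2 * ‖w‖ ^ 2))
        have heq : ‖u‖ ^ 2 - ‖Y₀ u‖ ^ 2
            + 2 * (-(‖u‖ ^ 2 - ‖Y₀ u‖ ^ 2 + 1) / (2 * ‖w‖ ^ 2) * ‖w‖ ^ 2) = -1 := by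
          field_simp
          ring
        rw [heq] at this
        linarith
      have := sub_eq_zero.mp hw0
      exact this.symm
    · refine Y₀.opNorm_le_bound zero_le_one (fun u => ?_)
      simpa using hle u
end

section
/- Let H₁, H₂ be Hilbert spaces, J₁ = [[I,0],[0,−I]] on H₁ ⊕ H₂ (a signature operator), and M : H₁ ⊕ H₂ → H₁ ⊕ H₂ a bounded operator written in block form M = [[M₁₁, M₁₂],[M₂₁, M₂₂]] satisfying both M* J₁ M ≼ J₁ and M J₁ M* ≼ J₁. Then M₂₂ is boundedly invertible and ‖M₂₂⁻¹ M₂₁‖ < 1. -/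
open ContinuousLinearMap
open scoped ComplexInnerProductSpace

/-!
Testing the two form inequalities on vectors `(0, x)` gives `‖x‖ ≤ ‖M₂₂ x‖` and
`‖M₂₁† y‖² + ‖y‖² ≤ ‖M₂₂† y‖²`. Hence both `M₂₂` and `M₂₂†` are bounded below, so `M₂₂` has
closed dense range and trivial kernel, i.e. it is invertible. Writing `y = (M₂₂⁻¹)† z`, the second
inequality reads `‖(M₂₂⁻¹ M₂₁)† z‖² + ‖y‖² ≤ ‖z‖²`, and `‖y‖ ≥ ‖z‖ / ‖M₂₂‖` keeps `‖y‖²` from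
being negligible against `‖z‖²`, which gives `‖M₂₂⁻¹ M₂₁‖ = ‖(M₂₂⁻¹ M₂₁)†‖ < 1`.
-/

namespace ContinuousLinearMap

section Normed

variable {𝕜 E F G : Type*} [NontriviallyNormedField 𝕜]
  [SeminormedAddCommGroup E] [NormedSpace 𝕜 E] [SeminormedAddCommGroup F] [NormedSpace 𝕜 F]
  [SeminormedAddCommGroup G] [NormedSpace 𝕜 G]

theorem sq_norm_le_of_sq_norm_add_sq_norm_le (S : E →L[𝕜] F) (T : E →L[𝕜] G)
    (h : ∀ x, ‖S x‖ ^ 2 + ‖x‖ ^ 2 ≤ ‖T x‖ ^ 2) (x : E) :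
    ‖S x‖ ^ 2 ≤ ‖T‖ ^ 2 / (1 + ‖T‖ ^ 2) * ‖T x‖ ^ 2 := by
  have hTx : ‖T x‖ ^ 2 ≤ ‖T‖ ^ 2 * ‖x‖ ^ 2 := by
    rw [← mul_pow]
    exact pow_le_pow_left₀ (norm_nonneg _) (T.le_opNorm x) 2
  rw [div_mul_eq_mul_div, le_div_iff₀ (by positivity)]
  nlinarith [h x, sq_nonneg ‖T‖]

theorem norm_comp_lt_one_of_sq_norm_add_sq_norm_le (S : E →L[𝕜] F) (T : E →L[𝕜] G)
    (R : G →L[𝕜] E) (hTR : T ∘L R = 1) (h : ∀ x, ‖S x‖ ^ 2 + ‖x‖ ^ 2 ≤ ‖T x‖ ^ 2) :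
    ‖S ∘L R‖ < 1 := by
  set c := ‖T‖ ^ 2 / (1 + ‖T‖ ^ 2)
  have hc : c < 1 := (div_lt_one (by positivity)).2 (lt_one_add _)
  have hbound : ∀ z, ‖(S ∘L R) z‖ ≤ √c * ‖z‖ := by
    intro z
    have hz : T (R z) = z := congr($hTR z)
    rw [← sq_le_sq₀ (norm_nonneg _) (by positivity), mul_pow, Real.sq_sqrt (by positivity)]
    simpa [hz] using sq_norm_le_of_sq_norm_add_sq_norm_le S T h (R z)
  have hsqrt : √c < 1 := (Real.sqrt_lt' one_pos).2 (by rwa [one_pow])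
  exact (opNorm_le_bound _ (Real.sqrt_nonneg c) hbound).trans_lt hsqrt

end Normed

variable {𝕜 E : Type*} [RCLike 𝕜] [NormedAddCommGroup E] [InnerProductSpace 𝕜 E] [CompleteSpace E]

theorem isUnit_of_antilipschitz_of_injective_adjoint (T : E →L[𝕜] E) {K : NNReal}
    (hT : AntilipschitzWith K T) (hT' : Function.Injective (adjoint T)) : IsUnit T := by
  rw [isUnit_iff_bijective, bijective_iff_dense_range_and_antilipschitz,
    Submodule.topologicalClosure_eq_top_iff, orthogonal_range, LinearMap.ker_eq_bot]
  exact ⟨hT', K, hT⟩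

end ContinuousLinearMap

/-- If the block operator `M = [[M₁₁,M₁₂],[M₂₁,M₂₂]]` on `H₁ ⊕ H₂` is a
`J₁`-bi-contraction for `J₁ = diag(I,-I)` (expressed via the quadratic forms of
`M* J₁ M ≼ J₁` and `M J₁ M* ≼ J₁`), then `M₂₂` is boundedly invertible and
`‖M₂₂⁻¹ M₂₁‖ < 1`. -/
theorem bicontraction_corner_invertible
    {H1 H2 : Type*} [NormedAddCommGroup H1] [InnerProductSpace ℂ H1] [CompleteSpace H1]
    [NormedAddCommGroup H2] [InnerProductSpace ℂ H2] [CompleteSpace H2]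
    (M11 : H1 →L[ℂ] H1) (M12 : H2 →L[ℂ] H1) (M21 : H1 →L[ℂ] H2) (M22 : H2 →L[ℂ] H2)
    (hcontr : ∀ (x1 : H1) (x2 : H2),
      ‖M11 x1 + M12 x2‖ ^ 2 - ‖M21 x1 + M22 x2‖ ^ 2 ≤ ‖x1‖ ^ 2 - ‖x2‖ ^ 2)
    (hcocontr : ∀ (y1 : H1) (y2 : H2),
      ‖adjoint M11 y1 + adjoint M21 y2‖ ^ 2 - ‖adjoint M12 y1 + adjoint M22 y2‖ ^ 2
        ≤ ‖y1‖ ^ 2 - ‖y2‖ ^ 2) :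
    ∃ N : H2 →L[ℂ] H2, M22 ∘L N = 1 ∧ N ∘L M22 = 1 ∧ ‖N ∘L M21‖ < 1 := by
  have hM22_anti : AntilipschitzWith 1 M22 := M22.antilipschitz_of_bound fun x => by
    have := hcontr 0 x
    simp only [map_zero, zero_add, norm_zero] at this
    rw [NNReal.coe_one, one_mul, ← sq_le_sq₀ (norm_nonneg _) (norm_nonneg _)]
    linarith [sq_nonneg ‖M12 x‖]
  have hM22adj : ∀ y, ‖adjoint M21 y‖ ^ 2 + ‖y‖ ^ 2 ≤ ‖adjoint M22 y‖ ^ 2 := fun y => by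
    have := hcocontr 0 y
    simp only [map_zero, zero_add, norm_zero] at this
    linarith
  have hM22adj_anti : AntilipschitzWith 1 (adjoint M22) := (adjoint M22).antilipschitz_of_bound
    fun y => by
      rw [NNReal.coe_one, one_mul, ← sq_le_sq₀ (norm_nonneg _) (norm_nonneg _)]
      linarith [hM22adj y, sq_nonneg ‖adjoint M21 y‖]
  obtain ⟨u, rfl⟩ := isUnit_of_antilipschitz_of_injective_adjoint M22 hM22_anti
    hM22adj_anti.injective
  refine ⟨↑u⁻¹, u.mul_inv, u.inv_mul, ?_⟩
  rw [← LinearIsometryEquiv.norm_map adjoint, adjoint_comp]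
  refine norm_comp_lt_one_of_sq_norm_add_sq_norm_le _ _ _ ?_ hM22adj
  rw [← adjoint_comp]
  exact (congrArg adjoint u.inv_mul).trans adjoint_one
end

section
/- With M a (J₂,J₁)-bi-contraction as above (J₁ = diag(I_{H₁},−I_{H₂}), J₂ = diag(I_F,−I_{H₂})) and E : H₂ → F a contraction, define T := (M₁₁ E + M₁₂)(M₂₁ E + M₂₂)⁻¹ : H₂ → H₁. Then T is a contraction: T* T ≼ I. -/
open ContinuousLinearMap
open scoped ComplexInnerProductSpace

/-- With `M : F ⊕ H₂ → H₁ ⊕ H₂` a `(J₂,J₁)`-bi-contraction (`J₁ = diag(I,-I)`,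
`J₂ = diag(I,-I)`, expressed via quadratic forms), `E : H₂ → F` a contraction and
`N` the bounded inverse of `M₂₁ E + M₂₂`, the linear fractional transform
`T := (M₁₁ E + M₁₂)(M₂₁ E + M₂₂)⁻¹` is a contraction. -/
theorem lft_is_contraction
    {F H1 H2 : Type*} [NormedAddCommGroup F] [InnerProductSpace ℂ F] [CompleteSpace F]
    [NormedAddCommGroup H1] [InnerProductSpace ℂ H1] [CompleteSpace H1]
    [NormedAddCommGroup H2] [InnerProductSpace ℂ H2] [CompleteSpace H2]
    (M11 : F →L[ℂ] H1) (M12 : H2 →L[ℂ] H1) (M21 : F →L[ℂ] H2) (M22 : H2 →L[ℂ] H2)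
    (hcontr : ∀ (f : F) (x2 : H2),
      ‖M11 f + M12 x2‖ ^ 2 - ‖M21 f + M22 x2‖ ^ 2 ≤ ‖f‖ ^ 2 - ‖x2‖ ^ 2)
    (hcocontr : ∀ (y1 : H1) (y2 : H2),
      ‖adjoint M11 y1 + adjoint M21 y2‖ ^ 2 - ‖adjoint M12 y1 + adjoint M22 y2‖ ^ 2
        ≤ ‖y1‖ ^ 2 - ‖y2‖ ^ 2)
    (E : H2 →L[ℂ] F) (hE : ‖E‖ ≤ 1)
    (N : H2 →L[ℂ] H2)
    (hNl : (M21 ∘L E + M22) ∘L N = 1) (hNr : N ∘L (M21 ∘L E + M22) = 1) :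
    ∀ x2 : H2, ‖((M11 ∘L E + M12) ∘L N) x2‖ ≤ ‖x2‖ := by
  intro x2
  set y := N x2 with hy
  have h1 : M21 (E y) + M22 y = x2 := by
    have := congrArg (fun T => T x2) hNl
    simpa [comp_apply, add_apply] using this
  have h2 := hcontr (E y) y
  rw [h1] at h2
  have hEy : ‖E y‖ ≤ ‖y‖ := by
    calc ‖E y‖ ≤ ‖E‖ * ‖y‖ := E.le_opNorm y
    _ ≤ 1 * ‖y‖ := by gcongr
    _ = ‖y‖ := one_mul _
  have hval : ((M11 ∘L E + M12) ∘L N) x2 = M11 (E y) + M12 y := by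
    simp [comp_apply, add_apply, hy]
  rw [hval]
  have hsq : ‖M11 (E y) + M12 y‖ ^ 2 ≤ ‖x2‖ ^ 2 := by nlinarith [norm_nonneg (E y), norm_nonneg y]
  exact (pow_le_pow_iff_left₀ (norm_nonneg _) (norm_nonneg _) two_ne_zero).mp hsq
end

section
/- Let A = [[A₁₁,A₁₂],[A₂₁,A₂₂]] be a 2×2 block operator (or matrix of formal power series) with A₂₂ invertible and the Schur complement A₁₁ − A₁₂ A₂₂⁻¹ A₂₁ invertible. Let E be such that I + A₂₂⁻¹ A₂₁ E is invertible and set S := (A₁₁E + A₁₂)(A₂₁E + A₂₂)⁻¹. Then A₁₁ − S A₂₁ = (A₁₁ − A₁₂ A₂₂⁻¹ A₂₁)(I + E A₂₂⁻¹ A₂₁)⁻¹ is invertible, and E = (A₁₁ − S A₂₁)⁻¹(S A₂₂ − A₁₂). -/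
private lemma ring_inv_eq {R : Type*} [Ring R] {x y : R} (h1 : x * y = 1) (h2 : y * x = 1) :
    Ring.inverse x = y := by
  have : Ring.inverse ((⟨x, y, h1, h2⟩ : Rˣ) : R) = y := Ring.inverse_unit _
  simpa using this

private lemma ring_unit {R : Type*} [Ring R] {x y : R} (h1 : x * y = 1) (h2 : y * x = 1) :
    IsUnit x := ⟨⟨x, y, h1, h2⟩, rfl⟩

/-- Injectivity of the linear fractional map: in a (noncommutative) ring, if `A₂₂`
is invertible, the Schur complement `A₁₁ - A₁₂ A₂₂⁻¹ A₂₁` is invertible,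
`1 + A₂₂⁻¹ A₂₁ E` is invertible, and `S = (A₁₁ E + A₁₂)(A₂₁ E + A₂₂)⁻¹`, then
`A₁₁ - S A₂₁ = (A₁₁ - A₁₂ A₂₂⁻¹ A₂₁)(1 + E A₂₂⁻¹ A₂₁)⁻¹` is invertible and
`E = (A₁₁ - S A₂₁)⁻¹ (S A₂₂ - A₁₂)`. -/
theorem lft_injectivity {R : Type*} [Ring R]
    (A11 A12 A21 A22 E S : R)
    (h22 : IsUnit A22)
    (hSchur : IsUnit (A11 - A12 * Ring.inverse A22 * A21))
    (hdom : IsUnit (1 + Ring.inverse A22 * A21 * E))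
    (hS : S = (A11 * E + A12) * Ring.inverse (A21 * E + A22)) :
    IsUnit (A11 - S * A21) ∧
    A11 - S * A21
      = (A11 - A12 * Ring.inverse A22 * A21)
          * Ring.inverse (1 + E * Ring.inverse A22 * A21) ∧
    E = Ring.inverse (A11 - S * A21) * (S * A22 - A12) := by
  set b := Ring.inverse A22 with hb
  have hb1 : A22 * b = 1 := Ring.mul_inverse_cancel _ h22
  have hb2 : b * A22 = 1 := Ring.inverse_mul_cancel _ h22
  set a := b * A21 with ha
  -- inverse of 1 + a * E
  obtain ⟨u, hu⟩ := hdom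
  set v : R := ((u⁻¹ : Rˣ) : R) with hv
  have hv1 : (1 + a * E) * v = 1 := by rw [← hu, hv]; exact u.mul_inv
  have hv2 : v * (1 + a * E) = 1 := by rw [← hu, hv]; exact u.inv_mul
  -- inverse of 1 + E * a
  set w : R := 1 - E * v * a with hw
  have hw1 : (1 + E * a) * w = 1 := by
    have h : E * ((1 + a * E) * v) * a = E * a := by rw [hv1]; noncomm_ring
    calc (1 + E * a) * w = 1 + E * a - E * ((1 + a * E) * v) * a + E * a * E * v * a
            - E * a * E * v * a := by rw [hw]; noncomm_ring
    _ = 1 := by rw [h]; noncomm_ring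
  have hw2 : w * (1 + E * a) = 1 := by
    have h : E * (v * (1 + a * E)) * a = E * a := by rw [hv2]; noncomm_ring
    calc w * (1 + E * a) = 1 + E * a - E * (v * (1 + a * E)) * a + E * v * a * E * a
            - E * v * a * E * a := by rw [hw]; noncomm_ring
    _ = 1 := by rw [h]; noncomm_ring
  -- Schur complement inverse
  obtain ⟨t, ht⟩ := hSchur
  set Sc : R := A11 - A12 * b * A21 with hSc
  have hts : Sc = (t : R) := ht.symm
  have ht1 : Sc * ((t⁻¹ : Rˣ) : R) = 1 := by rw [hts]; exact t.mul_inv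
  have ht2 : ((t⁻¹ : Rˣ) : R) * Sc = 1 := by rw [hts]; exact t.inv_mul
  set s : R := ((t⁻¹ : Rˣ) : R) with hs
  -- A21 * E + A22 = A22 * (1 + a * E)
  have hden : A21 * E + A22 = A22 * (1 + a * E) := by
    have : A22 * (a * E) = (A22 * b) * (A21 * E) := by rw [ha]; noncomm_ring
    rw [mul_add, mul_one, this, hb1, one_mul]; abel
  have hdinv : Ring.inverse (A21 * E + A22) = v * b := by
    apply ring_inv_eq
    · rw [hden]
      calc A22 * (1 + a * E) * (v * b) = A22 * ((1 + a * E) * v) * b := by noncomm_ring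
        _ = 1 := by rw [hv1, mul_one, hb1]
    · rw [hden]
      calc v * b * (A22 * (1 + a * E)) = v * ((b * A22) * (1 + a * E)) := by noncomm_ring
        _ = 1 := by rw [hb2, one_mul, hv2]
  have hSe : S = (A11 * E + A12) * (v * b) := by rw [hS, hdinv]
  -- v * a = a * w
  have hva : v * a = a * w := by
    calc v * a = v * (a * ((1 + E * a) * w)) := by rw [hw1, mul_one]
      _ = v * ((1 + a * E) * (a * w)) := by noncomm_ring
      _ = (v * (1 + a * E)) * (a * w) := by noncomm_ring
      _ = a * w := by rw [hv2, one_mul]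
  -- A11 - S * A21 = Sc * w
  have hkey : A11 - S * A21 = Sc * w := by
    have h1 : S * A21 = (A11 * E + A12) * (v * a) := by rw [hSe, ha]; noncomm_ring
    rw [h1, hva]
    calc A11 - (A11 * E + A12) * (a * w)
        = (A11 * ((1 + E * a) * w)) - (A11 * E + A12) * (a * w) := by rw [hw1, mul_one]
      _ = (A11 - A12 * a) * w := by noncomm_ring
      _ = Sc * w := by rw [hSc, ha]; noncomm_ring
  have hunit : IsUnit (A11 - S * A21) := by
    rw [hkey]
    apply ring_unit (y := (1 + E * a) * s)
    · calc Sc * w * ((1 + E * a) * s) = Sc * (w * (1 + E * a)) * s := by noncomm_ring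
        _ = 1 := by rw [hw2, mul_one, ht1]
    · calc (1 + E * a) * s * (Sc * w) = (1 + E * a) * (s * Sc) * w := by noncomm_ring
        _ = 1 := by rw [ht2, mul_one, hw1]
  refine ⟨hunit, ?_, ?_⟩
  · have hiw : Ring.inverse (1 + E * a) = w := ring_inv_eq hw1 hw2
    have hrw : (1:R) + E * Ring.inverse A22 * A21 = 1 + E * a := by
      rw [ha, ← hb]; noncomm_ring
    rw [hkey, hSc, hrw, hiw]
  · have hinv : Ring.inverse (A11 - S * A21) = (1 + E * a) * s := by
      apply ring_inv_eq
      · rw [hkey]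
        calc Sc * w * ((1 + E * a) * s) = Sc * (w * (1 + E * a)) * s := by noncomm_ring
          _ = 1 := by rw [hw2, mul_one, ht1]
      · rw [hkey]
        calc (1 + E * a) * s * (Sc * w) = (1 + E * a) * (s * Sc) * w := by noncomm_ring
          _ = 1 := by rw [ht2, mul_one, hw1]
    -- S * A22 - A12 = Sc * E * v
    have hSA : S * A22 - A12 = Sc * (E * v) := by
      have h1 : S * A22 = (A11 * E + A12) * v := by
        rw [hSe]
        calc (A11 * E + A12) * (v * b) * A22 = (A11 * E + A12) * v * (b * A22) := by noncomm_ring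
          _ = (A11 * E + A12) * v := by rw [hb2, mul_one]
      have h2 : A12 = A12 * ((1 + a * E) * v) := by rw [hv1, mul_one]
      rw [h1]
      calc (A11 * E + A12) * v - A12
          = (A11 * E + A12) * v - A12 * ((1 + a * E) * v) := by rw [← h2]
        _ = (A11 * E - A12 * a * E) * v := by noncomm_ring
        _ = Sc * (E * v) := by rw [hSc, ha]; noncomm_ring
    rw [hinv, hSA]
    symm
    calc (1 + E * a) * s * (Sc * (E * v))
        = (1 + E * a) * (s * Sc) * (E * v) := by noncomm_ring
      _ = (1 + E * a) * (E * v) := by rw [ht2, mul_one]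
      _ = E * ((1 + a * E) * v) := by noncomm_ring
      _ = E := by rw [hv1, mul_one]
end

section
/- Let X, U, Y be Hilbert spaces, A ∈ L(H₂, X), x ∈ X, T₂ ∈ L(H̃₂, H₂) a contraction, and set P := A (I − T₂ T₂*) A*. If there exists g ∈ H₂ with g ∈ Ran (I − T₂T₂*)^{1/2}, A g = x, and lifted norm ‖g‖_{H(T₂)} ≤ 1, then P ≽ x x* (i.e., P − x x* is positive semidefinite, where x x* denotes the rank-one operator y ↦ ⟨y, x⟩ x). -/
open ContinuousLinearMap
open scoped ComplexInnerProductSpace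

/-!
Factor `I - T₂T₂* = D D` with `D` self-adjoint and write `x = (A D) g'`. With `S := A D`, the
difference `P - x x*` equals `S (I - g' g'*) S*`, and `I - g' g'*` is positive for `‖g'‖ ≤ 1`
by the Cauchy–Schwarz inequality; conjugation preserves positivity.
-/

section

open InnerProductSpace

variable {𝕜 E F : Type*} [RCLike 𝕜]
  [NormedAddCommGroup E] [InnerProductSpace 𝕜 E] [CompleteSpace E]
  [NormedAddCommGroup F] [InnerProductSpace 𝕜 F] [CompleteSpace F]

theorem InnerProductSpace.isPositive_one_sub_rankOne_self {g : E} (hg : ‖g‖ ≤ 1) :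
    (1 - rankOne 𝕜 g g).IsPositive := by
  refine isPositive_def'.mpr ⟨IsSelfAdjoint.one _ |>.sub (isPositive_rankOne_self g).isSelfAdjoint,
    fun y => ?_⟩
  have hcs : ‖⟪g, y⟫_𝕜‖ ≤ ‖y‖ :=
    (norm_inner_le_norm g y).trans (mul_le_of_le_one_left (norm_nonneg y) hg)
  have hre : (1 - rankOne 𝕜 g g).reApplyInnerSelf y = ‖y‖ ^ 2 - ‖⟪g, y⟫_𝕜‖ ^ 2 := by
    rw [reApplyInnerSelf_apply, sub_apply, one_apply_eq_self, rankOne_apply, inner_sub_left,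
      inner_smul_left, RCLike.conj_mul, map_sub, inner_self_eq_norm_sq]
    norm_cast
  rw [hre, sub_nonneg]
  exact pow_le_pow_left₀ (norm_nonneg _) hcs 2

theorem ContinuousLinearMap.comp_one_sub_rankOne_comp_adjoint (S : E →L[𝕜] F) (g : E) :
    S ∘L (1 - rankOne 𝕜 g g) ∘L adjoint S = S ∘L adjoint S - rankOne 𝕜 (S g) (S g) := by
  rw [sub_comp, rankOne_comp, adjoint_adjoint, comp_sub, comp_rankOne, one_def, id_comp]

theorem ContinuousLinearMap.isPositive_comp_adjoint_sub_rankOne_apply (S : E →L[𝕜] F) {g : E}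
    (hg : ‖g‖ ≤ 1) : (S ∘L adjoint S - rankOne 𝕜 (S g) (S g)).IsPositive := by
  rw [← comp_one_sub_rankOne_comp_adjoint]
  exact (isPositive_one_sub_rankOne_self hg).conj_adjoint S

end

theorem interpolation_necessity_general
    {H2 Ht X : Type*} [NormedAddCommGroup H2] [InnerProductSpace ℂ H2] [CompleteSpace H2]
    [NormedAddCommGroup Ht] [InnerProductSpace ℂ Ht] [CompleteSpace Ht]
    [NormedAddCommGroup X] [InnerProductSpace ℂ X] [CompleteSpace X]
    (A : H2 →L[ℂ] X) (x : X) (T2 : Ht →L[ℂ] H2)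
    (D : H2 →L[ℂ] H2) (hDpos : D.IsPositive)
    (hDsq : D ∘L D = 1 - T2 ∘L adjoint T2)
    (hex : ∃ g' : H2, ‖g'‖ ≤ 1 ∧ A (D g') = x) :
    ((A ∘L ((1 - T2 ∘L adjoint T2) ∘L adjoint A))
      - (innerSL ℂ x).smulRight x).IsPositive := by
  obtain ⟨g', hg', rfl⟩ := hex
  have hP : A ∘L ((1 - T2 ∘L adjoint T2) ∘L adjoint A) = (A ∘L D) ∘L adjoint (A ∘L D) := by
    rw [adjoint_comp, hDpos.isSelfAdjoint.adjoint_eq, ← hDsq]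
    rfl
  rw [hP, ← InnerProductSpace.rankOne_def]
  exact (A ∘L D).isPositive_comp_adjoint_sub_rankOne_apply hg'

/-- Necessity in the solvability criterion: if there exists `g` in the generalized
de Branges–Rovnyak space `H(T₂) = Ran D` (with `D` the positive square root of
`I - T₂ T₂*`) such that `A g = x` and the lifted norm of `g` is at most `1`
(i.e. `g = D g'` with `‖g'‖ ≤ 1`), then `P := A (I - T₂ T₂*) A*` dominates the
rank-one operator `x x*`. -/
theorem interpolation_necessity
    {H2 Ht X : Type*} [NormedAddCommGroup H2] [InnerProductSpace ℂ H2] [CompleteSpace H2]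
    [NormedAddCommGroup Ht] [InnerProductSpace ℂ Ht] [CompleteSpace Ht]
    [NormedAddCommGroup X] [InnerProductSpace ℂ X] [CompleteSpace X]
    (A : H2 →L[ℂ] X) (x : X) (T2 : Ht →L[ℂ] H2) (hT2 : ‖T2‖ ≤ 1)
    (D : H2 →L[ℂ] H2) (hDpos : D.IsPositive)
    (hDsq : D ∘L D = 1 - T2 ∘L adjoint T2)
    (hex : ∃ g' : H2, ‖g'‖ ≤ 1 ∧ A (D g') = x) :
    ((A ∘L ((1 - T2 ∘L adjoint T2) ∘L adjoint A))
      - (innerSL ℂ x).smulRight x).IsPositive :=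
  interpolation_necessity_general A x T2 D hDpos hDsq hex
end

section
/- Conversely, with the notation above, if P := A (I − T₂T₂*) A* satisfies P ≽ x x*, then there exists g ∈ Ran (I − T₂T₂*)^{1/2} with A g = x and ‖g‖_{H(T₂)} ≤ 1. -/
/-!
Put `C := A D`. Since `D` is self-adjoint with `D² = I - T₂T₂*`, we have `P = C C*`, so `P ≽ x x*`
says `|⟪x, y⟫| ≤ ‖C* y‖` for every `y`. Hence `C* y ↦ ⟪x, y⟫` is a well-defined functional of norm
at most `1` on `Ran C*`; extending it by Hahn–Banach and representing it by Riesz gives `g'` with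
`‖g'‖ ≤ 1` and `⟪C g', y⟫ = ⟪g', C* y⟫ = ⟪x, y⟫` for all `y`, i.e. `C g' = x`
(the rank-one case of Douglas' lemma).
-/

open ContinuousLinearMap
open scoped InnerProductSpace

section

variable {𝕜 E F V : Type*} [RCLike 𝕜]

theorem LinearMap.exists_dual_norm_le_one_comp_eq [NormedAddCommGroup E] [NormedSpace 𝕜 E]
    [AddCommGroup V] [Module 𝕜 V] (B : V →ₗ[𝕜] E) (ℓ : V →ₗ[𝕜] 𝕜)
    (hℓ : ∀ v, ‖ℓ v‖ ≤ ‖B v‖) : ∃ φ : StrongDual 𝕜 E, ‖φ‖ ≤ 1 ∧ ∀ v, φ (B v) = ℓ v := by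
  have hker : LinearMap.ker B ≤ LinearMap.ker ℓ := fun v hv ↦ by
    simpa [LinearMap.mem_ker.mp hv] using hℓ v
  let φ₀ : LinearMap.range B →ₗ[𝕜] 𝕜 :=
    (LinearMap.ker B).liftQ ℓ hker ∘ₗ B.quotKerEquivRange.symm.toLinearMap
  have hφ₀ : ∀ v, φ₀ ⟨B v, B.mem_range_self v⟩ = ℓ v := fun v ↦ by simp [φ₀]
  have hbound : ∀ m, ‖φ₀ m‖ ≤ 1 * ‖m‖ := by
    rintro ⟨_, v, rfl⟩
    simpa [hφ₀] using hℓ v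
  obtain ⟨φ, hφext, hφnorm⟩ := exists_extension_norm_eq _ (φ₀.mkContinuous 1 hbound)
  exact ⟨φ, hφnorm ▸ φ₀.mkContinuous_norm_le zero_le_one hbound,
    fun v ↦ (hφext ⟨B v, B.mem_range_self v⟩).trans (hφ₀ v)⟩

variable [NormedAddCommGroup E] [InnerProductSpace 𝕜 E] [CompleteSpace E]
  [NormedAddCommGroup F] [InnerProductSpace 𝕜 F] [CompleteSpace F]

theorem ContinuousLinearMap.exists_norm_le_one_apply_eq_of_norm_inner_le (C : E →L[𝕜] F) (x : F)
    (hx : ∀ y, ‖⟪x, y⟫_𝕜‖ ≤ ‖adjoint C y‖) : ∃ g, ‖g‖ ≤ 1 ∧ C g = x := by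
  obtain ⟨φ, hφ, hφC⟩ :=
    (adjoint C : F →ₗ[𝕜] E).exists_dual_norm_le_one_comp_eq (innerSL 𝕜 x : F →ₗ[𝕜] 𝕜) hx
  refine ⟨(InnerProductSpace.toDual 𝕜 E).symm φ, by simpa using hφ, ext_inner_right 𝕜 fun y ↦ ?_⟩
  rw [← adjoint_inner_right, InnerProductSpace.toDual_symm_apply]
  exact hφC y

theorem ContinuousLinearMap.norm_inner_le_norm_adjoint_apply_of_isPositive
    {C : E →L[𝕜] F} {x : F}
    (hC : (C ∘L adjoint C - (innerSL 𝕜 x).smulRight x).IsPositive) (y : F) :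
    ‖⟪x, y⟫_𝕜‖ ≤ ‖adjoint C y‖ := by
  have hre : RCLike.re ⟪(C ∘L adjoint C - (innerSL 𝕜 x).smulRight x) y, y⟫_𝕜
      = ‖adjoint C y‖ ^ 2 - ‖⟪x, y⟫_𝕜‖ ^ 2 := by
    rw [sub_apply, inner_sub_left, comp_apply, ← adjoint_inner_right, smulRight_apply,
      innerSL_apply_apply, inner_smul_left, inner_self_eq_norm_sq_to_K, RCLike.conj_mul]
    simp
  have hsq := hC.re_inner_nonneg_left y
  rw [hre, sub_nonneg] at hsq
  exact (pow_le_pow_iff_left₀ (norm_nonneg _) (norm_nonneg _) two_ne_zero).mp hsq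

end

theorem interpolation_sufficiency_general
    {H2 Ht X : Type*} [NormedAddCommGroup H2] [InnerProductSpace ℂ H2] [CompleteSpace H2]
    [NormedAddCommGroup Ht] [InnerProductSpace ℂ Ht] [CompleteSpace Ht]
    [NormedAddCommGroup X] [InnerProductSpace ℂ X] [CompleteSpace X]
    (A : H2 →L[ℂ] X) (x : X) (T2 : Ht →L[ℂ] H2)
    (D : H2 →L[ℂ] H2) (hDpos : D.IsPositive)
    (hDsq : D ∘L D = 1 - T2 ∘L adjoint T2)
    (hP : ((A ∘L ((1 - T2 ∘L adjoint T2) ∘L adjoint A))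
      - (innerSL ℂ x).smulRight x).IsPositive) :
    ∃ g' : H2, ‖g'‖ ≤ 1 ∧ A (D g') = x := by
  have hfactor : A ∘L ((1 - T2 ∘L adjoint T2) ∘L adjoint A) = (A ∘L D) ∘L adjoint (A ∘L D) := by
    rw [← hDsq, adjoint_comp, hDpos.isSelfAdjoint.adjoint_eq]
    rfl
  rw [hfactor] at hP
  exact (A ∘L D).exists_norm_le_one_apply_eq_of_norm_inner_le x
    (norm_inner_le_norm_adjoint_apply_of_isPositive hP)

/-- Sufficiency in the solvability criterion: if `P := A (I - T₂ T₂*) A*` dominates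
the rank-one operator `x x*`, then there exists `g` in the generalized de
Branges–Rovnyak space `H(T₂) = Ran D` (with `D` the positive square root of
`I - T₂ T₂*`) with `A g = x` and lifted norm at most `1`, i.e. `g = D g'` with
`‖g'‖ ≤ 1` and `A (D g') = x`. -/
theorem interpolation_sufficiency
    {H2 Ht X : Type*} [NormedAddCommGroup H2] [InnerProductSpace ℂ H2] [CompleteSpace H2]
    [NormedAddCommGroup Ht] [InnerProductSpace ℂ Ht] [CompleteSpace Ht]
    [NormedAddCommGroup X] [InnerProductSpace ℂ X] [CompleteSpace X]
    (A : H2 →L[ℂ] X) (x : X) (T2 : Ht →L[ℂ] H2) (hT2 : ‖T2‖ ≤ 1)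
    (D : H2 →L[ℂ] H2) (hDpos : D.IsPositive)
    (hDsq : D ∘L D = 1 - T2 ∘L adjoint T2)
    (hP : ((A ∘L ((1 - T2 ∘L adjoint T2) ∘L adjoint A))
      - (innerSL ℂ x).smulRight x).IsPositive) :
    ∃ g' : H2, ‖g'‖ ≤ 1 ∧ A (D g') = x :=
  interpolation_sufficiency_general A x T2 D hDpos hDsq hP
end

section
/- For d ≥ 1, the ℂ^{d×d}-valued kernel 𝔎(λ,η) := k_d(λ,η) I_d − Z(η)* k_d(λ,η) Z(λ) on 𝔹^d × 𝔹^d, where k_d(λ,η) = 1/(1 − ⟨λ,η⟩) and Z(λ) = [λ₁ ⋯ λ_d], is a positive kernel: for all N, all points λ⁽¹⁾,…,λ⁽ᴺ⁾ ∈ 𝔹^d and vectors v₁,…,v_N ∈ ℂ^d, Σ_{i,j} ⟨𝔎(λ⁽ⁱ⁾, λ⁽ʲ⁾) v_j, v_i⟩ ≥ 0. -/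
open scoped ComplexConjugate

section Aux

open Finset

private lemma quad_re_nonneg' {N : ℕ} (c : Fin N → ℂ) :
    0 ≤ (∑ i : Fin N, ∑ j : Fin N, conj (c i) * c j).re := by
  have : (∑ i : Fin N, ∑ j : Fin N, conj (c i) * c j)
      = conj (∑ i, c i) * (∑ j, c j) := by
    rw [map_sum, Finset.sum_mul_sum]
  rw [this]
  simpa [Complex.mul_re, Complex.conj_re, Complex.conj_im] using
    (by nlinarith [sq_nonneg (∑ i, c i).re, sq_nonneg (∑ i, c i).im] :
      (0:ℝ) ≤ (∑ i, c i).re * (∑ i, c i).re + (∑ i, c i).im * (∑ i, c i).im)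

private lemma pow_term_nonneg' {d N : ℕ} (p : Fin N → Fin d → ℂ) (w : Fin N → ℂ) (n : ℕ) :
    0 ≤ (∑ i : Fin N, ∑ j : Fin N,
      conj (w i) * (∑ m, p i m * conj (p j m)) ^ n * w j).re := by
  have key : (∑ i : Fin N, ∑ j : Fin N,
      conj (w i) * (∑ m, p i m * conj (p j m)) ^ n * w j)
      = ∑ f : Fin n → Fin d, ∑ i : Fin N, ∑ j : Fin N,
          conj (w i * conj (∏ t, p i (f t))) * (w j * conj (∏ t, p j (f t))) := by
    have h1 : (∑ i : Fin N, ∑ j : Fin N,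
        conj (w i) * (∑ m, p i m * conj (p j m)) ^ n * w j)
        = ∑ i : Fin N, ∑ j : Fin N, ∑ f : Fin n → Fin d,
          conj (w i * conj (∏ t, p i (f t))) * (w j * conj (∏ t, p j (f t))) := by
      refine Finset.sum_congr rfl fun i _ => Finset.sum_congr rfl fun j _ => ?_
      rw [Fintype.sum_pow, Finset.mul_sum, Finset.sum_mul]
      refine Finset.sum_congr rfl fun f _ => ?_
      simp only [map_mul, map_prod, Complex.conj_conj]
      rw [Finset.prod_mul_distrib]
      ring
    rw [h1]
    exact (Finset.sum_congr rfl fun i _ => Finset.sum_comm).trans Finset.sum_comm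
  rw [key, Complex.re_sum]
  exact Finset.sum_nonneg fun f _ => quad_re_nonneg' _

private lemma norm_inner_lt_one' {d N : ℕ} (p : Fin N → Fin d → ℂ)
    (hp : ∀ i, ∑ a, ‖p i a‖ ^ 2 < 1) (i j : Fin N) :
    ‖∑ m, p i m * conj (p j m)‖ < 1 := by
  have h1 : ‖∑ m, p i m * conj (p j m)‖ ≤ ∑ m, ‖p i m‖ * ‖p j m‖ := by
    refine (norm_sum_le _ _).trans (le_of_eq ?_)
    refine Finset.sum_congr rfl fun m _ => ?_
    rw [norm_mul, RCLike.norm_conj]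
  have h2 : (∑ m, ‖p i m‖ * ‖p j m‖) ^ 2 ≤ (∑ m, ‖p i m‖ ^ 2) * ∑ m, ‖p j m‖ ^ 2 :=
    Finset.sum_mul_sq_le_sq_mul_sq _ _ _
  have h3 : (∑ m, ‖p i m‖ * ‖p j m‖) ^ 2 < 1 := by
    have hi0 : (0:ℝ) ≤ ∑ m, ‖p i m‖ ^ 2 :=
      Finset.sum_nonneg fun m _ => sq_nonneg _
    have hj0 : (0:ℝ) ≤ ∑ m, ‖p j m‖ ^ 2 :=
      Finset.sum_nonneg fun m _ => sq_nonneg _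
    nlinarith [hp i, hp j]
  have h4 : ∑ m, ‖p i m‖ * ‖p j m‖ < 1 := by
    nlinarith [Finset.sum_nonneg (fun m _ => mul_nonneg (norm_nonneg (p i m))
      (norm_nonneg (p j m)) : ∀ m ∈ Finset.univ, 0 ≤ ‖p i m‖ * ‖p j m‖)]
  exact lt_of_le_of_lt h1 h4

private lemma scalar_kernel_pos' {d N : ℕ} (p : Fin N → Fin d → ℂ)
    (hp : ∀ i, ∑ a, ‖p i a‖ ^ 2 < 1) (w : Fin N → ℂ) :
    0 ≤ (∑ i : Fin N, ∑ j : Fin N,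
      conj (w i) * (1 - ∑ m, p i m * conj (p j m))⁻¹ * w j).re := by
  have hz := norm_inner_lt_one' p hp
  have hsumm : ∀ i j : Fin N,
      Summable (fun n : ℕ => conj (w i) * (∑ m, p i m * conj (p j m)) ^ n * w j) :=
    fun i j => ((summable_geometric_of_norm_lt_one (hz i j)).mul_left _).mul_right _
  have hterm : ∀ i j : Fin N,
      conj (w i) * (1 - ∑ m, p i m * conj (p j m))⁻¹ * w j
        = ∑' n : ℕ, conj (w i) * (∑ m, p i m * conj (p j m)) ^ n * w j := by
    intro i j
    rw [← tsum_geometric_of_norm_lt_one (hz i j), ← tsum_mul_left, ← tsum_mul_right]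
  have hbig : (∑ i : Fin N, ∑ j : Fin N,
      conj (w i) * (1 - ∑ m, p i m * conj (p j m))⁻¹ * w j)
      = ∑' n : ℕ, ∑ i : Fin N, ∑ j : Fin N,
        conj (w i) * (∑ m, p i m * conj (p j m)) ^ n * w j := by
    simp only [hterm]
    rw [Summable.tsum_finsetSum (fun (i : Fin N) _ => summable_sum (fun (j : Fin N) _ => hsumm i j))]
    exact Finset.sum_congr rfl fun i _ => (Summable.tsum_finsetSum (fun (j : Fin N) _ => hsumm i j)).symm
  rw [hbig, Complex.re_tsum
    (summable_sum fun (i : Fin N) _ => summable_sum fun (j : Fin N) _ => hsumm i j)]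
  exact tsum_nonneg fun n => pow_term_nonneg' p w n

private lemma kernel_decomp' {d : ℕ} (v v' lam eta : Fin d → ℂ) (k : ℂ)
    (hk : (1 - ∑ m, lam m * conj (eta m)) * k = 1) :
    ∑ a, ∑ b, conj (v a) * ((if a = b then k else 0) - conj (eta a) * k * lam b) * v' b
      = (∑ a, conj (v a) * v' a)
        + (2:ℂ)⁻¹ * ∑ r, ∑ s,
            (conj (v r) * lam s - conj (v s) * lam r) * k *
              (v' r * conj (eta s) - v' s * conj (eta r)) := by
  have L : (∑ a, ∑ b, conj (v a) * ((if a = b then k else 0) - conj (eta a) * k * lam b) * v' b)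
      = k * (∑ a, conj (v a) * v' a)
        - k * ((∑ a, conj (v a) * conj (eta a)) * (∑ b, lam b * v' b)) := by
    simp only [sub_mul, mul_sub, Finset.sum_sub_distrib, ite_mul, zero_mul,
      Finset.sum_ite_eq', Finset.mem_univ, if_true, Finset.mul_sum, Finset.sum_mul]
    congr 1
    · refine Finset.sum_congr rfl fun a _ => ?_
      simp only [mul_ite, ite_mul, mul_zero, zero_mul, Finset.sum_ite_eq,
        Finset.mem_univ, if_true]
      ring
    · rw [Finset.sum_comm]
      refine Finset.sum_congr rfl fun a _ => Finset.sum_congr rfl fun b _ => by ring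
  have inner : ∀ r : Fin d, (∑ s, (conj (v r) * lam s - conj (v s) * lam r) * k *
        (v' r * conj (eta s) - v' s * conj (eta r)))
      = (conj (v r) * v' r) * (k * ∑ m, lam m * conj (eta m))
        - (conj (v r) * conj (eta r)) * (k * ∑ s, lam s * v' s)
        - (lam r * v' r) * (k * ∑ s, conj (v s) * conj (eta s))
        + (lam r * conj (eta r)) * (k * ∑ s, conj (v s) * v' s) := by
    intro r
    have : (∑ s, (conj (v r) * lam s - conj (v s) * lam r) * k *
          (v' r * conj (eta s) - v' s * conj (eta r)))
        = ∑ s, ((conj (v r) * v' r) * (k * (lam s * conj (eta s)))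
            - (conj (v r) * conj (eta r)) * (k * (lam s * v' s))
            - (lam r * v' r) * (k * (conj (v s) * conj (eta s)))
            + (lam r * conj (eta r)) * (k * (conj (v s) * v' s))) :=
      Finset.sum_congr rfl fun s _ => by ring
    rw [this]
    simp only [Finset.sum_add_distrib, Finset.sum_sub_distrib, ← Finset.mul_sum]
  have R : (∑ r, ∑ s, (conj (v r) * lam s - conj (v s) * lam r) * k *
        (v' r * conj (eta s) - v' s * conj (eta r)))
      = (∑ a, conj (v a) * v' a) * (k * ∑ m, lam m * conj (eta m))
        - (∑ a, conj (v a) * conj (eta a)) * (k * ∑ s, lam s * v' s)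
        - (∑ a, lam a * v' a) * (k * ∑ s, conj (v s) * conj (eta s))
        + (∑ a, lam a * conj (eta a)) * (k * ∑ s, conj (v s) * v' s) := by
    rw [Finset.sum_congr rfl fun r _ => inner r]
    simp only [Finset.sum_add_distrib, Finset.sum_sub_distrib, ← Finset.sum_mul]
  rw [L, R]
  linear_combination (∑ a, conj (v a) * v' a) * hk

private lemma sum_swap_4' {M : Type*} [AddCommMonoid M] {n1 n2 n3 n4 : ℕ}
    (f : Fin n1 → Fin n2 → Fin n3 → Fin n4 → M) :
    ∑ i, ∑ j, ∑ r, ∑ s, f i j r s = ∑ r, ∑ s, ∑ i, ∑ j, f i j r s :=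
  calc ∑ i, ∑ j, ∑ r, ∑ s, f i j r s
      = ∑ i, ∑ r, ∑ j, ∑ s, f i j r s :=
        Finset.sum_congr rfl fun i _ => Finset.sum_comm
    _ = ∑ r, ∑ i, ∑ j, ∑ s, f i j r s := Finset.sum_comm
    _ = ∑ r, ∑ i, ∑ s, ∑ j, f i j r s :=
        Finset.sum_congr rfl fun r _ =>
          Finset.sum_congr rfl fun i _ => Finset.sum_comm
    _ = ∑ r, ∑ s, ∑ i, ∑ j, f i j r s :=
        Finset.sum_congr rfl fun r _ => Finset.sum_comm

end Aux

/-- Positivity of the matrix kernel `𝔎(λ,η) = k_d(λ,η) I_d - Z(η)* k_d(λ,η) Z(λ)`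
on the unit ball `𝔹^d`, where `k_d(λ,η) = (1 - ⟨λ,η⟩)⁻¹` and `Z(λ) = [λ₁ ⋯ λ_d]`:
for any points `λ⁽¹⁾,…,λ⁽ᴺ⁾ ∈ 𝔹^d` and vectors `v₁,…,v_N ∈ ℂ^d`, the Gram sum
`Σ_{i,j} ⟨𝔎(λ⁽ⁱ⁾,λ⁽ʲ⁾) v_j, v_i⟩` is nonnegative. -/
theorem matrix_kernel_positive (d N : ℕ)
    (p : Fin N → Fin d → ℂ) (hp : ∀ i, ∑ a, ‖p i a‖ ^ 2 < 1)
    (v : Fin N → Fin d → ℂ) :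
    0 ≤ (∑ i : Fin N, ∑ j : Fin N, ∑ a : Fin d, ∑ b : Fin d,
      conj (v i a) *
        ((if a = b then (1 - ∑ m, p i m * conj (p j m))⁻¹ else 0)
          - conj (p j a) * (1 - ∑ m, p i m * conj (p j m))⁻¹ * p i b)
        * v j b).re := by
  have hz := norm_inner_lt_one' p hp
  have hk : ∀ i j : Fin N,
      (1 - ∑ m, p i m * conj (p j m)) * (1 - ∑ m, p i m * conj (p j m))⁻¹ = 1 := by
    intro i j
    refine mul_inv_cancel₀ ?_
    intro h
    rw [sub_eq_zero] at h
    have := hz i j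
    rw [← h] at this
    simp at this
  have step1 : (∑ i : Fin N, ∑ j : Fin N, ∑ a : Fin d, ∑ b : Fin d,
      conj (v i a) *
        ((if a = b then (1 - ∑ m, p i m * conj (p j m))⁻¹ else 0)
          - conj (p j a) * (1 - ∑ m, p i m * conj (p j m))⁻¹ * p i b)
        * v j b)
      = (∑ i : Fin N, ∑ j : Fin N, ∑ a : Fin d, conj (v i a) * v j a)
        + (2:ℂ)⁻¹ * ∑ r : Fin d, ∑ s : Fin d, ∑ i : Fin N, ∑ j : Fin N,
            (conj (v i r) * p i s - conj (v i s) * p i r)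
              * (1 - ∑ m, p i m * conj (p j m))⁻¹
              * (v j r * conj (p j s) - v j s * conj (p j r)) := by
    have h1 : ∀ i j : Fin N, (∑ a : Fin d, ∑ b : Fin d,
        conj (v i a) *
          ((if a = b then (1 - ∑ m, p i m * conj (p j m))⁻¹ else 0)
            - conj (p j a) * (1 - ∑ m, p i m * conj (p j m))⁻¹ * p i b)
          * v j b)
        = (∑ a, conj (v i a) * v j a)
          + (2:ℂ)⁻¹ * ∑ r, ∑ s,
              (conj (v i r) * p i s - conj (v i s) * p i r)
                * (1 - ∑ m, p i m * conj (p j m))⁻¹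
                * (v j r * conj (p j s) - v j s * conj (p j r)) :=
      fun i j => kernel_decomp' (v i) (v j) (p i) (p j) _ (hk i j)
    rw [Finset.sum_congr rfl fun i _ => Finset.sum_congr rfl fun j _ => h1 i j]
    simp only [Finset.sum_add_distrib]
    congr 1
    simp only [← Finset.mul_sum]
    congr 1
    exact sum_swap_4' _
  rw [step1, Complex.add_re]
  refine add_nonneg ?_ ?_
  · have h2 : (∑ i : Fin N, ∑ j : Fin N, ∑ a : Fin d, conj (v i a) * v j a)
        = ∑ a : Fin d, ∑ i : Fin N, ∑ j : Fin N, conj (v i a) * v j a :=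
      (Finset.sum_congr rfl fun i _ => Finset.sum_comm).trans Finset.sum_comm
    rw [h2, Complex.re_sum]
    exact Finset.sum_nonneg fun a _ => quad_re_nonneg' fun i => v i a
  · have h3 : ((2:ℂ)⁻¹ * ∑ r : Fin d, ∑ s : Fin d, ∑ i : Fin N, ∑ j : Fin N,
        (conj (v i r) * p i s - conj (v i s) * p i r)
          * (1 - ∑ m, p i m * conj (p j m))⁻¹
          * (v j r * conj (p j s) - v j s * conj (p j r))).re
        = (2:ℝ)⁻¹ * (∑ r : Fin d, ∑ s : Fin d, ∑ i : Fin N, ∑ j : Fin N,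
        (conj (v i r) * p i s - conj (v i s) * p i r)
          * (1 - ∑ m, p i m * conj (p j m))⁻¹
          * (v j r * conj (p j s) - v j s * conj (p j r))).re := by
      simp [Complex.mul_re]
    rw [h3]
    refine mul_nonneg (by norm_num) ?_
    rw [Complex.re_sum]
    refine Finset.sum_nonneg fun r _ => ?_
    rw [Complex.re_sum]
    refine Finset.sum_nonneg fun s _ => ?_
    have h4 : 0 ≤ (∑ i : Fin N, ∑ j : Fin N,
        conj (v i r * conj (p i s) - v i s * conj (p i r))
          * (1 - ∑ m, p i m * conj (p j m))⁻¹
          * (v j r * conj (p j s) - v j s * conj (p j r))).re :=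
      scalar_kernel_pos' p hp (fun j => v j r * conj (p j s) - v j s * conj (p j r))
    have h5 : (∑ i : Fin N, ∑ j : Fin N,
        (conj (v i r) * p i s - conj (v i s) * p i r)
          * (1 - ∑ m, p i m * conj (p j m))⁻¹
          * (v j r * conj (p j s) - v j s * conj (p j r)))
        = ∑ i : Fin N, ∑ j : Fin N,
          conj (v i r * conj (p i s) - v i s * conj (p i r))
            * (1 - ∑ m, p i m * conj (p j m))⁻¹
            * (v j r * conj (p j s) - v j s * conj (p j r)) := by
      refine Finset.sum_congr rfl fun i _ => Finset.sum_congr rfl fun j _ => ?_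
      simp only [map_sub, map_mul, Complex.conj_conj]
    rw [h5]
    exact h4
end
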